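/- The partial Cayley transform Φ(W,η) = (i(I_n+W)(I_n−W)⁻¹, 2iη(I_n−W)⁻¹) from 𝔻_{n,m} to ℍ_{n,m} is a bijection with inverse Φ⁻¹(Ω,Z) = ((Ω−iI_n)(Ω+iI_n)⁻¹, Z(Ω+iI_n)⁻¹). -/

import Mathlib

open Matrix Complex
open scoped ComplexOrder

/-- Entrywise conjugate of a complex matrix. -/
def conjMat {k l : Type*} (M : Matrix k l ℂ) : Matrix k l ℂ :=
  M.map (starRingEnd ℂ)

/-- Entrywise imaginary part of a complex matrix. -/
def imMat {n : ℕ} (Ω : Matrix (Fin n) (Fin n) ℂ) : Matrix (Fin n) (Fin n) ℝ :=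
  Matrix.of fun i j => (Ω i j).im

/-- Membership in the generalized unit disk `𝔻_n`. -/
def InDisk {n : ℕ} (W : Matrix (Fin n) (Fin n) ℂ) : Prop :=
  W = Wᵀ ∧ (1 - conjMat W * W).PosDef

/-- Membership in the Siegel upper half plane `ℍ_n`. -/
def InSiegel {n : ℕ} (Ω : Matrix (Fin n) (Fin n) ℂ) : Prop :=
  Ωᵀ = Ω ∧ (imMat Ω).PosDef

/-- The partial Cayley transform `Φ : 𝔻_{n,m} → ℍ_{n,m}`. -/
noncomputable def cayley {n m : ℕ}
    (p : Matrix (Fin n) (Fin n) ℂ × Matrix (Fin m) (Fin n) ℂ) :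
    Matrix (Fin n) (Fin n) ℂ × Matrix (Fin m) (Fin n) ℂ :=
  (Complex.I • ((1 + p.1) * (1 - p.1)⁻¹), (2 * Complex.I) • (p.2 * (1 - p.1)⁻¹))

/-- The inverse partial Cayley transform `Φ⁻¹ : ℍ_{n,m} → 𝔻_{n,m}`. -/
noncomputable def cayleyInv {n m : ℕ}
    (p : Matrix (Fin n) (Fin n) ℂ × Matrix (Fin m) (Fin n) ℂ) :
    Matrix (Fin n) (Fin n) ℂ × Matrix (Fin m) (Fin n) ℂ :=
  ((p.1 - Complex.I • 1) * (p.1 + Complex.I • 1)⁻¹, p.2 * (p.1 + Complex.I • 1)⁻¹)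

/-!
`W` and `Ω` correspond under the transform exactly when `(1 - W)(Ω + i) = 2i`. This relation
makes both factors invertible, determines each of `W`, `Ω` from the other and survives
transposition, so `W` is symmetric iff `Ω` is. It also gives `Ω(1 - W) = i(1 + W)`, whence
`(1 - W)ᴴ (Ω - Ωᴴ) (1 - W) = 2i (1 - Wᴴ W)`; for symmetric `Ω` the matrix `(Ω - Ωᴴ) / 2i` is
`Im Ω`, so `1 - Wᴴ W > 0` iff `Im Ω > 0`. The second components are handled by
`2i (1 - W)⁻¹ = Ω + i`. The relation is set up from either side because `1 - W` is invertible
on `𝔻_n` and `Ω + i` on `ℍ_n`: a kernel vector would be isotropic for the positive definite form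
`1 - Wᴴ W`, resp. `Im Ω + 1`.
-/

theorem Complex.two_mul_I_ne_zero : 2 * I ≠ 0 := by simp

namespace Matrix

variable {ι : Type*} [Fintype ι] [DecidableEq ι]

theorem isUnit_of_sub_conjTranspose_eq_smul {M P : Matrix ι ι ℂ} {c : ℂ} (hc : c ≠ 0)
    (hM : M - Mᴴ = c • P) (hP : P.PosDef) : IsUnit M := by
  rw [isUnit_iff_isUnit_det, isUnit_iff_ne_zero]
  intro hdet
  obtain ⟨v, hv, hMv⟩ := exists_mulVec_eq_zero_iff.mpr hdet
  have hform : star v ⬝ᵥ ((M - Mᴴ) *ᵥ v) = 0 := by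
    rw [sub_mulVec, dotProduct_sub, hMv, dotProduct_mulVec, ← star_mulVec, hMv]
    simp
  rw [hM, smul_mulVec, dotProduct_smul, smul_eq_mul, mul_eq_zero] at hform
  exact (hP.dotProduct_mulVec_pos hv).ne' (hform.resolve_left hc)

theorem isUnit_one_sub_of_posDef {W : Matrix ι ι ℂ} (hW : (1 - Wᴴ * W).PosDef) :
    IsUnit (1 - W) := by
  rw [isUnit_iff_isUnit_det, isUnit_iff_ne_zero]
  intro hdet
  obtain ⟨v, hv, hWv⟩ := exists_mulVec_eq_zero_iff.mpr hdet
  have hfix : W *ᵥ v = v := by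
    rw [sub_mulVec, one_mulVec, sub_eq_zero] at hWv
    exact hWv.symm
  have hform : star v ⬝ᵥ ((1 - Wᴴ * W) *ᵥ v) = 0 := by
    rw [sub_mulVec, one_mulVec, dotProduct_sub, ← mulVec_mulVec, hfix, dotProduct_mulVec,
      ← star_mulVec, hfix, sub_self]
  exact (hW.dotProduct_mulVec_pos hv).ne' hform

theorem posDef_map_ofReal_iff {Y : Matrix ι ι ℝ} : (Y.map ofReal).PosDef ↔ Y.PosDef := by
  have hconj : (Y.map ofReal)ᴴ = Yᴴ.map ofReal :=
    conjTranspose_map _ (fun a => (conj_ofReal a).symm) |>.symm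
  have hquad (x : ι → ℝ) : star (ofReal ∘ x) ⬝ᵥ (Y.map ofReal *ᵥ (ofReal ∘ x))
      = ((star x ⬝ᵥ (Y *ᵥ x) : ℝ) : ℂ) := by
    have hstar : star (ofReal ∘ x) = ofRealHom ∘ star x := funext fun i => conj_ofReal (x i)
    have hmul : Y.map ofReal *ᵥ (ofReal ∘ x) = ofRealHom ∘ (Y *ᵥ x) :=
      funext fun i => (RingHom.map_mulVec ofRealHom Y x i).symm
    rw [hstar, hmul, ← RingHom.map_dotProduct]
    rfl
  constructor
  · intro h
    refine .of_dotProduct_mulVec_pos ?_ fun x hx => ?_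
    · exact map_injective ofReal_injective (hconj.symm.trans h.1)
    · have hx' : ofReal ∘ x ≠ 0 := fun h0 => hx (funext fun i => by simpa using congrFun h0 i)
      have := h.dotProduct_mulVec_pos hx'
      rwa [hquad, zero_lt_real] at this
  · intro h
    open scoped MatrixOrder in
    obtain ⟨B, hB⟩ := CStarAlgebra.nonneg_iff_eq_star_mul_self.mp h.posSemidef.nonneg
    have hsemi : (Y.map ofReal).PosSemidef := by
      change (ofRealHom.mapMatrix Y).PosSemidef
      rw [hB, map_mul, star_eq_conjTranspose]
      change ((Bᴴ).map ofReal * B.map ofReal).PosSemidef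
      rw [conjTranspose_map _ (fun a => (conj_ofReal a).symm)]
      exact posSemidef_conjTranspose_mul_self _
    rw [hsemi.posDef_iff_det_ne_zero]
    change (ofRealHom.mapMatrix Y).det ≠ 0
    rw [← RingHom.map_det]
    exact ofReal_ne_zero.mpr h.det_pos.ne'

end Matrix

section CayleyPair

variable {ι : Type*} [Fintype ι] [DecidableEq ι]

/-- `W` and `Ω` correspond under the Cayley transform, `Ω = i (1 + W)(1 - W)⁻¹`. -/
def IsCayleyPair (W Ω : Matrix ι ι ℂ) : Prop :=
  (1 - W) * (Ω + I • 1) = (2 * I) • 1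

theorem isCayleyPair_iff_mul_rev {W Ω : Matrix ι ι ℂ} :
    IsCayleyPair W Ω ↔ (Ω + I • 1) * (1 - W) = (2 * I) • 1 := by
  have key : ∀ A B : Matrix ι ι ℂ, A * B = (2 * I) • 1 ↔ A * ((2 * I)⁻¹ • B) = 1 := by
    intro A B
    rw [mul_smul_comm, inv_smul_eq_iff₀ two_mul_I_ne_zero]
  rw [IsCayleyPair, key, key, mul_smul_comm, ← smul_mul_assoc, mul_eq_one_comm]

namespace IsCayleyPair

variable {W Ω : Matrix ι ι ℂ}

theorem mul_rev (h : IsCayleyPair W Ω) : (Ω + I • 1) * (1 - W) = (2 * I) • 1 :=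
  isCayleyPair_iff_mul_rev.mp h

theorem one_sub_mul_inv (h : IsCayleyPair W Ω) : (1 - W) * ((2 * I)⁻¹ • (Ω + I • 1)) = 1 := by
  rw [mul_smul_comm, h, inv_smul_smul₀ two_mul_I_ne_zero]

theorem add_mul_inv (h : IsCayleyPair W Ω) : (Ω + I • 1) * ((2 * I)⁻¹ • (1 - W)) = 1 := by
  rw [mul_smul_comm, h.mul_rev, inv_smul_smul₀ two_mul_I_ne_zero]

theorem inv_one_sub (h : IsCayleyPair W Ω) : (1 - W)⁻¹ = (2 * I)⁻¹ • (Ω + I • 1) :=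
  inv_eq_right_inv h.one_sub_mul_inv

theorem inv_add (h : IsCayleyPair W Ω) : (Ω + I • 1)⁻¹ = (2 * I)⁻¹ • (1 - W) :=
  inv_eq_right_inv h.add_mul_inv

theorem isUnit_one_sub (h : IsCayleyPair W Ω) : IsUnit (1 - W) :=
  (isUnit_iff_isUnit_det _).mpr (isUnit_det_of_right_inverse h.one_sub_mul_inv)

theorem isUnit_add (h : IsCayleyPair W Ω) : IsUnit (Ω + I • 1) :=
  (isUnit_iff_isUnit_det _).mpr (isUnit_det_of_right_inverse h.add_mul_inv)

theorem right_unique {Ω' : Matrix ι ι ℂ} (h : IsCayleyPair W Ω) (h' : IsCayleyPair W Ω') :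
    Ω = Ω' := by
  have := h.inv_one_sub.symm.trans h'.inv_one_sub
  rwa [smul_right_inj (inv_ne_zero two_mul_I_ne_zero), add_left_inj] at this

theorem left_unique {W' : Matrix ι ι ℂ} (h : IsCayleyPair W Ω) (h' : IsCayleyPair W' Ω) :
    W = W' := by
  have := h.inv_add.symm.trans h'.inv_add
  rwa [smul_right_inj (inv_ne_zero two_mul_I_ne_zero), sub_right_inj] at this

theorem transpose (h : IsCayleyPair W Ω) : IsCayleyPair Wᵀ Ωᵀ := by
  have := congrArg Matrix.transpose h.mul_rev
  rwa [transpose_mul, transpose_sub, transpose_add, transpose_smul, transpose_smul,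
    transpose_one] at this

theorem transpose_eq_self_iff (h : IsCayleyPair W Ω) : Wᵀ = W ↔ Ωᵀ = Ω :=
  ⟨fun hW => (h.right_unique (hW ▸ h.transpose)).symm,
    fun hΩ => (h.left_unique (hΩ ▸ h.transpose)).symm⟩

theorem mul_one_sub (h : IsCayleyPair W Ω) : Ω * (1 - W) = I • (1 + W) := by
  have := h.mul_rev
  rw [add_mul, smul_mul_assoc, one_mul, ← eq_sub_iff_add_eq] at this
  rw [this]
  module

theorem conjTranspose_mul_sub_mul (h : IsCayleyPair W Ω) :
    (1 - W)ᴴ * (Ω - Ωᴴ) * (1 - W) = (2 * I) • (1 - Wᴴ * W) := by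
  have hΩ := h.mul_one_sub
  have hΩH : (1 - W)ᴴ * Ωᴴ = (-I) • (1 + W)ᴴ := by
    rw [← conjTranspose_mul, hΩ, conjTranspose_smul]
    simp
  rw [Matrix.mul_sub (1 - W)ᴴ, Matrix.sub_mul, hΩH, mul_assoc, hΩ, mul_smul_comm, smul_mul_assoc]
  simp only [conjTranspose_sub, conjTranspose_add, conjTranspose_one, sub_mul, mul_sub,
    add_mul, mul_add, one_mul, mul_one]
  module

theorem posDef_iff {Y : Matrix ι ι ℂ} (h : IsCayleyPair W Ω) (hY : Ω - Ωᴴ = (2 * I) • Y) :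
    (1 - Wᴴ * W).PosDef ↔ Y.PosDef := by
  have hconj : (1 - W)ᴴ * Y * (1 - W) = 1 - Wᴴ * W := by
    have := h.conjTranspose_mul_sub_mul
    rwa [hY, mul_smul_comm, smul_mul_assoc, smul_right_inj two_mul_I_ne_zero] at this
  rw [← hconj, ← star_eq_conjTranspose]
  exact h.isUnit_one_sub.posDef_star_left_conjugate_iff

end IsCayleyPair

variable {W Ω : Matrix ι ι ℂ}

theorem isCayleyPair_cayley (hW : IsUnit (1 - W)) :
    IsCayleyPair W (I • ((1 + W) * (1 - W)⁻¹)) := by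
  rw [isCayleyPair_iff_mul_rev, add_mul, smul_mul_assoc, mul_assoc,
    nonsing_inv_mul _ ((isUnit_iff_isUnit_det _).mp hW), mul_one, smul_mul_assoc, one_mul]
  module

theorem isCayleyPair_cayleyInv (hΩ : IsUnit (Ω + I • 1)) :
    IsCayleyPair ((Ω - I • 1) * (Ω + I • 1)⁻¹) Ω := by
  rw [IsCayleyPair, sub_mul, one_mul, mul_assoc,
    nonsing_inv_mul _ ((isUnit_iff_isUnit_det _).mp hΩ), mul_one]
  module

end CayleyPair

theorem conjMat_eq_conjTranspose {k : Type*} {W : Matrix k k ℂ} (hW : Wᵀ = W) :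
    conjMat W = Wᴴ := by
  rw [conjTranspose, hW]
  rfl

theorem sub_conjTranspose_eq_imMat {n : ℕ} {Ω : Matrix (Fin n) (Fin n) ℂ} (hΩ : Ωᵀ = Ω) :
    Ω - Ωᴴ = (2 * I) • (imMat Ω).map ofReal := by
  rw [← conjMat_eq_conjTranspose hΩ]
  ext i j
  simp only [Matrix.sub_apply, conjMat, map_apply, Matrix.smul_apply, imMat, of_apply,
    smul_eq_mul, sub_conj]
  push_cast
  ring

theorem InDisk.isUnit_one_sub {n : ℕ} {W : Matrix (Fin n) (Fin n) ℂ} (hW : InDisk W) :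
    IsUnit (1 - W) := by
  obtain ⟨hsymm, hpos⟩ := hW
  rw [conjMat_eq_conjTranspose hsymm.symm] at hpos
  exact isUnit_one_sub_of_posDef hpos

theorem InSiegel.isUnit_add {n : ℕ} {Ω : Matrix (Fin n) (Fin n) ℂ} (hΩ : InSiegel Ω) :
    IsUnit (Ω + I • 1) := by
  refine isUnit_of_sub_conjTranspose_eq_smul two_mul_I_ne_zero (P := (imMat Ω).map ofReal + 1)
    ?_ ((posDef_map_ofReal_iff.mpr hΩ.2).add_posSemidef PosSemidef.one)
  rw [conjTranspose_add, add_sub_add_comm, sub_conjTranspose_eq_imMat hΩ.1, conjTranspose_smul,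
    conjTranspose_one, star_def, conj_I]
  module

theorem IsCayleyPair.inDisk_iff_inSiegel {n : ℕ} {W Ω : Matrix (Fin n) (Fin n) ℂ}
    (h : IsCayleyPair W Ω) : InDisk W ↔ InSiegel Ω := by
  rw [InDisk, InSiegel, eq_comm (a := W), h.transpose_eq_self_iff]
  refine and_congr_right fun hΩ => ?_
  rw [conjMat_eq_conjTranspose (h.transpose_eq_self_iff.mpr hΩ), ← posDef_map_ofReal_iff]
  exact h.posDef_iff (sub_conjTranspose_eq_imMat hΩ)

namespace IsCayleyPair

variable {n m : ℕ} {W Ω : Matrix (Fin n) (Fin n) ℂ}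

theorem cayley_mk (h : IsCayleyPair W Ω) (η : Matrix (Fin m) (Fin n) ℂ) :
    cayley (W, η) = (Ω, η * (Ω + I • 1)) := by
  refine Prod.ext ((isCayleyPair_cayley h.isUnit_one_sub).right_unique h) ?_
  change (2 * I) • (η * (1 - W)⁻¹) = η * (Ω + I • 1)
  rw [h.inv_one_sub, Matrix.mul_smul, smul_inv_smul₀ two_mul_I_ne_zero]

theorem cayleyInv_mk (h : IsCayleyPair W Ω) (Z : Matrix (Fin m) (Fin n) ℂ) :
    cayleyInv (Ω, Z) = (W, Z * (Ω + I • 1)⁻¹) :=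
  Prod.ext ((isCayleyPair_cayleyInv h.isUnit_add).left_unique h) rfl

theorem cayleyInv_cayley (h : IsCayleyPair W Ω) (η : Matrix (Fin m) (Fin n) ℂ) :
    cayleyInv (cayley (W, η)) = (W, η) := by
  rw [h.cayley_mk, h.cayleyInv_mk, Matrix.mul_assoc,
    mul_nonsing_inv _ ((isUnit_iff_isUnit_det _).mp h.isUnit_add), Matrix.mul_one]

theorem cayley_cayleyInv (h : IsCayleyPair W Ω) (Z : Matrix (Fin m) (Fin n) ℂ) :
    cayley (cayleyInv (Ω, Z)) = (Ω, Z) := by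
  rw [h.cayleyInv_mk, h.cayley_mk, Matrix.mul_assoc,
    nonsing_inv_mul _ ((isUnit_iff_isUnit_det _).mp h.isUnit_add), Matrix.mul_one]

end IsCayleyPair

/-- The partial Cayley transform is a bijection from `𝔻_{n,m}` onto
`ℍ_{n,m}` with inverse `Φ⁻¹(Ω,Z) = ((Ω−iI)(Ω+iI)⁻¹, Z(Ω+iI)⁻¹)`. -/
theorem cayley_bijective {n m : ℕ} :
    (∀ p : Matrix (Fin n) (Fin n) ℂ × Matrix (Fin m) (Fin n) ℂ,
      InDisk p.1 → InSiegel (cayley p).1 ∧ cayleyInv (cayley p) = p) ∧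
    (∀ p : Matrix (Fin n) (Fin n) ℂ × Matrix (Fin m) (Fin n) ℂ,
      InSiegel p.1 → InDisk (cayleyInv p).1 ∧ cayley (cayleyInv p) = p) := by
  refine ⟨fun ⟨W, η⟩ hW => ?_, fun ⟨Ω, Z⟩ hΩ => ?_⟩
  · have h := isCayleyPair_cayley hW.isUnit_one_sub
    exact ⟨h.inDisk_iff_inSiegel.mp hW, h.cayleyInv_cayley η⟩
  · have h := isCayleyPair_cayleyInv hΩ.isUnit_add
    exact ⟨h.inDisk_iff_inSiegel.mpr hΩ, h.cayley_cayleyInv Z⟩
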